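/- arXiv:2204.02929 — 4 statements merged into one kernel-verified Lean document; each statement's English description precedes it below -/
import Mathlib

section
/- Given any fixed beam (array of slots, some holding search nodes) at the start of a level of monobeam, for every slot index c, the node that monobeam places into slot c of the next beam at the end of processing slot c is the same for every beam width w with w ≥ c (in particular, it does not depend on the contents of slots with index greater than c nor on the beam width). -/
open scoped Classical

noncomputable section

/-- A search space: start state, successor function giving (child, cost) pairs with
nonnegative costs, goal predicate, and a nonnegative heuristic. -/
structure SearchSpace (σ : Type) where
  start : σ
  succ : σ → List (σ × ℝ)
  isGoal : σ → Bool
  h : σ → ℝ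
  succ_nonneg : ∀ s, ∀ p ∈ succ s, 0 ≤ p.2
  h_nonneg : ∀ s, 0 ≤ h s

/-- A search node: the state it represents, the cost `g` of the path by which it was
reached, and its (pathmax-corrected) `f`-value. -/
structure Node (σ : Type) where
  state : σ
  g : ℝ
  f : ℝ

variable {σ : Type}

/-- `PathCost S s t c`: there is a path from `s` to `t` of total cost `c`. -/
inductive PathCost (S : SearchSpace σ) : σ → σ → ℝ → Prop
  | refl (s : σ) : PathCost S s s 0
  | step {s t u : σ} {c c' : ℝ} : (t, c) ∈ S.succ s → PathCost S t u c' →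
      PathCost S s u (c + c')

/-- The heuristic is admissible: `h s` is at most the cost of any path from `s` to a goal. -/
def SearchSpace.Admissible (S : SearchSpace σ) : Prop :=
  ∀ s t c, S.isGoal t = true → PathCost S s t c → S.h s ≤ c

/-- The space contains no infinite sequences of zero-cost operators. -/
def SearchSpace.NoInfiniteZeroCost (S : SearchSpace σ) : Prop :=
  ¬ ∃ seq : ℕ → σ, ∀ i, (seq (i + 1), (0 : ℝ)) ∈ S.succ (seq i)

/-- Ordering used to select candidates: minimum `f`, ties broken on lower `h`,
remaining ties broken by the fixed deterministic key `key`. -/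
def rank (S : SearchSpace σ) (key : Node σ → ℕ) (n : Node σ) : ℝ ×ₗ (ℝ ×ₗ ℕ) :=
  toLex (n.f, toLex (S.h n.state, key n))

/-- Remove-min from the candidates priority queue (deterministic). -/
def selectMin (S : SearchSpace σ) (key : Node σ → ℕ) (cands : List (Node σ)) :
    Option (Node σ) :=
  cands.argmin (rank S key)

/-- Expanding a node: children get `g` increased by the action cost, and their
`f`-value is pathmax-corrected to be at least the parent's `f`. -/
def children (S : SearchSpace σ) (n : Node σ) : List (Node σ) :=
  (S.succ n.state).map fun p =>
    { state := p.1, g := n.g + p.2, f := max (n.g + p.2 + S.h p.1) n.f }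

/-- Cost of the incumbent solution (`⊤` when there is none). -/
def incCost (inc : Option (Node σ)) : WithTop ℝ :=
  inc.elim ⊤ fun n => (n.f : WithTop ℝ)

/-- Record any goal children whose `f`-value beats the incumbent. -/
def updateIncumbent (inc : Option (Node σ)) (goals : List (Node σ)) : Option (Node σ) :=
  goals.foldl (fun inc c => if (c.f : WithTop ℝ) < incCost inc then some c else inc) inc

/-- State maintained while processing the slots of one level. -/
structure LevelState (σ : Type) where
  candidates : List (Node σ)
  nextBeam : List (Option (Node σ))
  incumbent : Option (Node σ)

/-- Expansion part of processing one slot: expand the node in the slot (if any),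
handle goal children via the incumbent, and add non-goal children to candidates. -/
def expandSlot (S : SearchSpace σ) (st : LevelState σ) (slot : Option (Node σ)) :
    LevelState σ :=
  match slot with
  | none => st
  | some n =>
    let kids := children S n
    { candidates := st.candidates ++ kids.filter (fun c => !(S.isGoal c.state)),
      nextBeam := st.nextBeam,
      incumbent := updateIncumbent st.incumbent (kids.filter (fun c => S.isGoal c.state)) }

/-- Process one slot `c` of the beam: expand, then (if candidates is nonempty)
remove the minimum-`f` candidate and place it in slot `c` of the next beam. -/
def processSlot (S : SearchSpace σ) (key : Node σ → ℕ) (st : LevelState σ)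
    (slot : Option (Node σ)) : LevelState σ :=
  let st1 := expandSlot S st slot
  match selectMin S key st1.candidates with
  | none => { st1 with nextBeam := st1.nextBeam ++ [none] }
  | some n => { st1 with candidates := st1.candidates.erase n,
                         nextBeam := st1.nextBeam ++ [some n] }

/-- One level of monobeam: process the slots in order, starting from an empty
candidates queue, producing the next beam and the updated incumbent. -/
def levelStep (S : SearchSpace σ) (key : Node σ → ℕ) (beam : List (Option (Node σ)))
    (inc : Option (Node σ)) : List (Option (Node σ)) × Option (Node σ) :=
  let st := beam.foldl (processSlot S key) ⟨[], [], inc⟩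
  (st.nextBeam, st.incumbent)

/-- The root node. -/
def startNode (S : SearchSpace σ) : Node σ := ⟨S.start, 0, S.h S.start⟩

/-- Initial beam of width `w`: the start node in slot 1, all other slots empty. -/
def initBeam (S : SearchSpace σ) (w : ℕ) : List (Option (Node σ)) :=
  some (startNode S) :: List.replicate (w - 1) none

/-- The (beam, incumbent) pair of monobeam with width `w` when the stopping
condition is tested for the `t`-th time (`t = 0` is the initial beam). -/
def run (S : SearchSpace σ) (key : Node σ → ℕ) (w : ℕ) :
    ℕ → List (Option (Node σ)) × Option (Node σ)
  | 0 => (initBeam S w, none)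
  | t + 1 => let p := run S key w t; levelStep S key p.1 p.2

/-- Stopping condition: no slot of the beam holds a node with `f`-value less than
the incumbent solution cost. -/
def stopCond (p : List (Option (Node σ)) × Option (Node σ)) : Prop :=
  ∀ n : Node σ, some n ∈ p.1 → incCost p.2 ≤ (n.f : WithTop ℝ)

/-- Monobeam with width `w` terminates after testing the stopping condition `t+… `
times: `t` is the first time the stopping condition holds. -/
def TerminatesAt (S : SearchSpace σ) (key : Node σ → ℕ) (w t : ℕ) : Prop :=
  stopCond (run S key w t) ∧ ∀ t' < t, ¬ stopCond (run S key w t')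

/-- Monobeam with width `w` terminates and returns the solution node `n`. -/
def Returns (S : SearchSpace σ) (key : Node σ → ℕ) (w : ℕ) (n : Node σ) : Prop :=
  ∃ t, TerminatesAt S key w t ∧ (run S key w t).2 = some n


/-- Auxiliary: the fold of `processSlot` appends to `nextBeam`; the candidates and
incumbent do not depend on the initial `nextBeam`. -/
theorem foldl_processSlot_nextBeam (S : SearchSpace σ) (key : Node σ → ℕ) :
    ∀ (l : List (Option (Node σ))) (cs : List (Node σ)) (nb : List (Option (Node σ)))
      (ic : Option (Node σ)),
      List.foldl (processSlot S key) ⟨cs, nb, ic⟩ l =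
        ⟨(List.foldl (processSlot S key) ⟨cs, [], ic⟩ l).candidates,
         nb ++ (List.foldl (processSlot S key) ⟨cs, [], ic⟩ l).nextBeam,
         (List.foldl (processSlot S key) ⟨cs, [], ic⟩ l).incumbent⟩ := by
  intro l
  induction l with
  | nil => intro cs nb ic; simp
  | cons s l ih =>
    intro cs nb ic
    have step : ∀ nb' : List (Option (Node σ)),
        processSlot S key ⟨cs, nb', ic⟩ s =
          ⟨(processSlot S key ⟨cs, [], ic⟩ s).candidates,
           nb' ++ (processSlot S key ⟨cs, [], ic⟩ s).nextBeam,
           (processSlot S key ⟨cs, [], ic⟩ s).incumbent⟩ := by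
      intro nb'
      cases s with
      | none =>
        simp only [processSlot, expandSlot]
        cases selectMin S key cs <;> simp
      | some n =>
        simp only [processSlot, expandSlot]
        cases selectMin S key (cs ++ List.filter (fun c => !S.isGoal c.state)
          (children S n)) <;> simp
    rw [List.foldl_cons, List.foldl_cons, step nb]
    generalize processSlot S key ⟨cs, [], ic⟩ s = p
    obtain ⟨cs', nb', ic'⟩ := p
    rw [ih, ih]
    simp only [List.nil_append]
    rw [ih cs' nb' ic']
    simp [List.append_assoc]

theorem foldl_processSlot_length (S : SearchSpace σ) (key : Node σ → ℕ) :
    ∀ (l : List (Option (Node σ))) (st : LevelState σ),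
      (List.foldl (processSlot S key) st l).nextBeam.length =
        st.nextBeam.length + l.length := by
  intro l
  induction l with
  | nil => intro st; simp
  | cons s l ih =>
    intro st
    rw [List.foldl_cons, ih]
    have hps : (processSlot S key st s).nextBeam.length = st.nextBeam.length + 1 := by
      cases s with
      | none =>
        simp only [processSlot, expandSlot]
        cases selectMin S key st.candidates <;> simp
      | some n =>
        simp only [processSlot, expandSlot]
        cases selectMin S key (st.candidates ++ List.filter (fun c => !S.isGoal c.state)
          (children S n)) <;> simp
    rw [hps]
    simp only [List.length_cons]
    omega

theorem levelStep_getElem (S : SearchSpace σ) (key : Node σ → ℕ)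
    (bf : ℕ → Option (Node σ)) (inc : Option (Node σ)) (c w : ℕ) (hw : c < w) :
    ((levelStep S key ((List.range w).map bf) inc).1)[c]? =
      ((List.foldl (processSlot S key) ⟨[], [], inc⟩
        ((List.range (c + 1)).map bf)).nextBeam)[c]? := by
  obtain ⟨k, rfl⟩ : ∃ k, w = (c + 1) + k := ⟨w - (c + 1), by omega⟩
  rw [List.range_add, List.map_append]
  simp only [levelStep, List.foldl_append]
  set st1 := List.foldl (processSlot S key) ⟨[], [], inc⟩ ((List.range (c + 1)).map bf)
    with hst1
  have hlen : st1.nextBeam.length = c + 1 := by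
    rw [hst1, foldl_processSlot_length]; simp
  obtain ⟨cs1, nb1, ic1⟩ := st1
  rw [foldl_processSlot_nextBeam]
  simp only at hlen ⊢
  rw [List.getElem?_append, if_pos (by omega)]

/-- Lemma 1: given any fixed assignment `bf` of nodes to beam slots
and any incumbent at the start of a level of monobeam, for every slot index `c`
(0-indexed), the entry placed into slot `c` of the next beam is the same for every
beam width `w ≥ c + 1`; in particular it does not depend on the contents of slots
after `c` nor on the beam width. -/
theorem monobeam_slot_selection_independent_of_width
    {σ : Type} (S : SearchSpace σ) (key : Node σ → ℕ)
    (bf : ℕ → Option (Node σ)) (inc : Option (Node σ))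
    (c w₁ w₂ : ℕ) (hw₁ : c < w₁) (hw₂ : c < w₂) :
    ((levelStep S key ((List.range w₁).map bf) inc).1)[c]? =
      ((levelStep S key ((List.range w₂).map bf) inc).1)[c]? := by
  rw [levelStep_getElem S key bf inc c w₁ hw₁, levelStep_getElem S key bf inc c w₂ hw₂]

end
end

section
/- Let w_a < w_b be beam widths, let d_a and d_b be the depths (levels) at which monobeam with widths w_a and w_b respectively terminates, and let beam_{i,d} denote the beam of the width-w_i search when its stopping condition is tested at the beginning of level d. Then for every depth d with 1 ≤ d ≤ min(d_a, d_b) and every slot j with 1 ≤ j ≤ w_a, beam_{a,d}[j] = beam_{b,d}[j]; that is, the two searches agree on the first w_a slots of the beam at every common level. -/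
open scoped Classical

noncomputable section

variable {σ : Type}

/-!
Within one level, the candidates queue and the next beam evolve independently of the incumbent,
and slot `c` of the next beam is fixed once slots `1, …, c` of the current beam have been processed.
So if the width-`wa` beam is a prefix of the width-`wb` beam, the same holds one level later; the
two initial beams are of this form, and by induction so are the beams at every level.
-/

open List

section Monobeam

variable (S : SearchSpace σ) (key : Node σ → ℕ)

theorem expandSlot_nextBeam (st : LevelState σ) (slot : Option (Node σ)) :
    (expandSlot S st slot).nextBeam = st.nextBeam := by
  cases slot <;> rfl

theorem processSlot_nextBeam (st : LevelState σ) (slot : Option (Node σ)) :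
    ∃ x, (processSlot S key st slot).nextBeam = st.nextBeam ++ [x] := by
  simp only [processSlot]
  split <;> exact ⟨_, by rw [expandSlot_nextBeam]⟩

theorem foldl_processSlot_nextBeam_s1 (beam : List (Option (Node σ))) (st : LevelState σ) :
    ∃ t, (beam.foldl (processSlot S key) st).nextBeam = st.nextBeam ++ t ∧
      t.length = beam.length := by
  induction beam generalizing st with
  | nil => exact ⟨[], by simp⟩
  | cons slot beam ih =>
    obtain ⟨x, hx⟩ := processSlot_nextBeam S key st slot
    obtain ⟨t, ht, hlen⟩ := ih (processSlot S key st slot)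
    exact ⟨x :: t, by simp [ht, hx], by simp [hlen]⟩

theorem levelStep_length (beam : List (Option (Node σ))) (inc : Option (Node σ)) :
    (levelStep S key beam inc).1.length = beam.length := by
  obtain ⟨t, ht, hlen⟩ := foldl_processSlot_nextBeam_s1 S key beam ⟨[], [], inc⟩
  simp [levelStep, ht, hlen]

theorem processSlot_withIncumbent (st : LevelState σ) (inc : Option (Node σ))
    (slot : Option (Node σ)) :
    ∃ inc', processSlot S key { st with incumbent := inc } slot =
      { processSlot S key st slot with incumbent := inc' } := by
  cases slot <;> simp only [processSlot, expandSlot] <;> split <;> exact ⟨_, rfl⟩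

theorem foldl_processSlot_withIncumbent (beam : List (Option (Node σ))) (st : LevelState σ)
    (inc : Option (Node σ)) :
    ∃ inc', beam.foldl (processSlot S key) { st with incumbent := inc } =
      { beam.foldl (processSlot S key) st with incumbent := inc' } := by
  induction beam generalizing st inc with
  | nil => exact ⟨inc, rfl⟩
  | cons slot beam ih =>
    obtain ⟨inc₁, h₁⟩ := processSlot_withIncumbent S key st inc slot
    obtain ⟨inc₂, h₂⟩ := ih (processSlot S key st slot) inc₁
    exact ⟨inc₂, by rw [foldl_cons, h₁, h₂]; rfl⟩

theorem levelStep_fst_isPrefix {beam beam' : List (Option (Node σ))} (h : beam <+: beam')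
    (inc inc' : Option (Node σ)) :
    (levelStep S key beam inc).1 <+: (levelStep S key beam' inc').1 := by
  obtain ⟨rest, rfl⟩ := h
  obtain ⟨inc'', hinc⟩ : ∃ i, beam.foldl (processSlot S key) ⟨[], [], inc'⟩ =
      { beam.foldl (processSlot S key) ⟨[], [], inc⟩ with incumbent := i } :=
    foldl_processSlot_withIncumbent S key beam ⟨[], [], inc⟩ inc'
  simp only [levelStep, foldl_append, hinc]
  obtain ⟨t, ht, -⟩ := foldl_processSlot_nextBeam_s1 S key rest _
  rw [ht]
  exact prefix_append _ _

theorem run_length {w : ℕ} (hw : 1 ≤ w) (d : ℕ) : (run S key w d).1.length = w := by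
  induction d with
  | zero => simp only [run, initBeam, length_cons, length_replicate]; omega
  | succ d ih => simpa [run, levelStep_length] using ih

theorem run_fst_isPrefix {wa wb : ℕ} (hw : wa ≤ wb) (d : ℕ) :
    (run S key wa d).1 <+: (run S key wb d).1 := by
  induction d with
  | zero =>
    simp only [run, initBeam, prefix_cons_inj, prefix_replicate_iff, length_replicate, and_true]
    omega
  | succ d ih => exact levelStep_fst_isPrefix S key ih _ _

end Monobeam

theorem monobeam_identical_levels_general
    {σ : Type} (S : SearchSpace σ) (key : Node σ → ℕ)
    (wa wb : ℕ) (hwa : 1 ≤ wa) (hw : wa < wb)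
    (d : ℕ) (j : ℕ) (hj : j < wa) :
    ((run S key wa d).1)[j]? = ((run S key wb d).1)[j]? := by
  have hj' : j < (run S key wa d).1.length := by rw [run_length S key hwa d]; exact hj
  rw [getElem?_eq_getElem hj', prefix_iff_getElem?.1 (run_fst_isPrefix S key hw.le d) j hj']

/-- Lemma 2: let `wa < wb` be beam widths and let `ta`, `tb` be the
(0-indexed) levels at which monobeam with widths `wa` and `wb` respectively terminates
(the first times the stopping condition holds).  Then at every level `d ≤ min ta tb`
(i.e. every level at which both searches test the stopping condition), the two beams
agree on all slots `j < wa`. -/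
theorem monobeam_identical_levels
    {σ : Type} (S : SearchSpace σ) (key : Node σ → ℕ)
    (wa wb : ℕ) (hwa : 1 ≤ wa) (hw : wa < wb) (ta tb : ℕ)
    (hta : TerminatesAt S key wa ta) (htb : TerminatesAt S key wb tb)
    (d : ℕ) (hd : d ≤ min ta tb) (j : ℕ) (hj : j < wa) :
    ((run S key wa d).1)[j]? = ((run S key wb d).1)[j]? :=
  monobeam_identical_levels_general S key wa wb hwa hw d j hj

end
end

section
/- At every level of the search, monobeam augmented with incumbent-based pruning, run with an admissible heuristic, selects for each slot of the next beam exactly the node that monobeam without pruning would have selected for that slot, except that some slots which would have held nodes with f-value greater than or equal to the incumbent solution cost may instead be left empty. -/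
open scoped Classical

noncomputable section

variable {σ : Type}

/-- Incumbent-based pruning (Algorithm 2): at the end of a level, empty every slot of
the next beam whose node has `f`-value ≥ the current incumbent solution cost. -/
def pruneBeam (inc : Option (Node σ)) (b : List (Option (Node σ))) :
    List (Option (Node σ)) :=
  b.map fun slot =>
    match slot with
    | none => none
    | some n => if incCost inc ≤ (n.f : WithTop ℝ) then none else some n

/-- One level of monobeam with incumbent-based pruning. -/
def levelStepP (S : SearchSpace σ) (key : Node σ → ℕ) (beam : List (Option (Node σ)))
    (inc : Option (Node σ)) : List (Option (Node σ)) × Option (Node σ) :=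
  let p := levelStep S key beam inc
  (pruneBeam p.2 p.1, p.2)

/-- Monobeam with incumbent-based pruning: the (beam, incumbent) pair of width `w`
when the stopping condition is tested for the `t`-th time. -/
def runP (S : SearchSpace σ) (key : Node σ → ℕ) (w : ℕ) :
    ℕ → List (Option (Node σ)) × Option (Node σ)
  | 0 => (initBeam S w, none)
  | t + 1 => let p := runP S key w t; levelStepP S key p.1 p.2

/-- Monobeam with pruning and width `w` terminates at the first time `t` at which the
stopping condition holds. -/
def TerminatesAtP (S : SearchSpace σ) (key : Node σ → ℕ) (w t : ℕ) : Prop :=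
  stopCond (runP S key w t) ∧ ∀ t' < t, ¬ stopCond (runP S key w t')

/-- Monobeam with pruning and width `w` terminates and returns the solution node `n`. -/
def ReturnsP (S : SearchSpace σ) (key : Node σ → ℕ) (w : ℕ) (n : Node σ) : Prop :=
  ∃ t, TerminatesAtP S key w t ∧ (runP S key w t).2 = some n

/-! ### Auxiliary lemmas for Statement 5 -/

section ArgminAux

variable {α : Type*} {β : Type*} [LinearOrder β] {r : α → β} {p : α → Bool}

lemma argmin_filter_of_argmin :
    ∀ {l : List α} {e : α}, l.argmin r = some e → (∀ x, r x ≤ r e → p x = true) →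
      (l.filter p).argmin r = some e := by
  intro l
  induction l with
  | nil => simp
  | cons a l ih =>
    intro e he hp
    rw [List.argmin_cons] at he
    rcases hl : l.argmin r with _ | c
    · rw [hl] at he
      simp only [Option.some.injEq] at he
      subst he
      have hl' : l = [] := List.argmin_eq_none.1 hl
      subst hl'
      simp [List.filter_cons, hp a le_rfl]
    · rw [hl] at he
      dsimp only at he
      split_ifs at he with hca
      · simp only [Option.some.injEq] at he
        subst he
        have hfe := ih hl hp
        rw [List.filter_cons]
        by_cases hpa : p a = true
        · rw [if_pos (by simp [hpa]), List.argmin_cons, hfe]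
          simp [hca]
        · rw [if_neg (by simp at hpa ⊢; exact hpa)]
          exact hfe
      · simp only [Option.some.injEq] at he
        subst he
        rw [List.filter_cons, if_pos (by simp [hp a le_rfl]), List.argmin_cons]
        rcases hd : (l.filter p).argmin r with _ | d
        · rfl
        · have hdl : d ∈ l := (List.mem_of_mem_filter (List.argmin_mem hd))
          have hcd : r c ≤ r d := List.le_of_mem_argmin hdl hl
          have : ¬ r d < r a := fun h => hca (lt_of_le_of_lt hcd h)
          simp [this]

lemma argmin_of_argmin_filter :
    ∀ {l : List α} {e : α}, (l.filter p).argmin r = some e → (∀ x, r x ≤ r e → p x = true) →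
      l.argmin r = some e := by
  intro l
  induction l with
  | nil => simp
  | cons a l ih =>
    intro e he hp
    by_cases hpa : p a = true
    · rw [List.filter_cons, if_pos (by simp [hpa]), List.argmin_cons] at he
      rcases hd : (l.filter p).argmin r with _ | d
      · rw [hd] at he
        simp only [Option.some.injEq] at he
        subst he
        rw [List.argmin_cons]
        rcases hc : l.argmin r with _ | c
        · rfl
        · have : ¬ r c < r a := by
            intro hlt
            have hcp : p c = true := hp c hlt.le
            have hcl : c ∈ l.filter p :=
              List.mem_filter.2 ⟨List.argmin_mem hc, hcp⟩
            rw [List.argmin_eq_none.1 hd] at hcl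
            simp at hcl
          simp [this]
      · rw [hd] at he
        dsimp only at he
        split_ifs at he with hda
        · simp only [Option.some.injEq] at he
          subst he
          have h2 := ih hd hp
          rw [List.argmin_cons, h2]
          simp [hda]
        · simp only [Option.some.injEq] at he
          subst he
          rw [List.argmin_cons]
          rcases hc : l.argmin r with _ | c
          · rfl
          · have : ¬ r c < r a := by
              intro hlt
              have hcp : p c = true := hp c hlt.le
              have hcl : c ∈ l.filter p :=
                List.mem_filter.2 ⟨List.argmin_mem hc, hcp⟩
              have : r d ≤ r c := List.le_of_mem_argmin hcl hd
              exact hda (lt_of_le_of_lt this hlt)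
            simp [this]
    · rw [List.filter_cons, if_neg (by simp at hpa ⊢; exact hpa)] at he
      have hl := ih he hp
      have hae : ¬ r a ≤ r e := fun h => hpa (hp a h)
      rw [List.argmin_cons, hl]
      simp [not_le.1 hae]

/-- If the low parts of two lists agree and the argmin of the first is low, then
the second list has the same argmin. -/
lemma argmin_eq_of_filter_eq {l lP : List α} (hf : l.filter p = lP.filter p)
    {e : α} (he : l.argmin r = some e) (hsmall : ∀ x, r x ≤ r e → p x = true) :
    lP.argmin r = some e := by
  have h1 : (l.filter p).argmin r = some e := argmin_filter_of_argmin he hsmall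
  rw [hf] at h1
  exact argmin_of_argmin_filter h1 hsmall

lemma filter_erase_pos [DecidableEq α] {a : α} (hpa : p a = true) :
    ∀ l : List α, (l.erase a).filter p = (l.filter p).erase a
  | [] => rfl
  | b :: l => by
    by_cases hba : b = a
    · subst hba
      simp [List.filter_cons, hpa]
    · rw [List.erase_cons_tail (by simpa using hba), List.filter_cons, List.filter_cons]
      by_cases hpb : p b = true
      · rw [if_pos (by simp [hpb]), if_pos (by simp [hpb]),
          List.erase_cons_tail (by simpa using hba), filter_erase_pos hpa l]
      · rw [if_neg (by simpa using hpb), if_neg (by simpa using hpb), filter_erase_pos hpa l]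

lemma filter_erase_neg [DecidableEq α] {a : α} (hpa : p a = false) :
    ∀ l : List α, (l.erase a).filter p = l.filter p
  | [] => rfl
  | b :: l => by
    by_cases hba : b = a
    · subst hba
      rw [List.erase_cons_head, List.filter_cons, if_neg (by simp [hpa])]
    · rw [List.erase_cons_tail (by simpa using hba), List.filter_cons, List.filter_cons,
        filter_erase_neg hpa l]

end ArgminAux

section MonobeamAux

variable (S : SearchSpace σ) (key : Node σ → ℕ)

/-- A node is "low" if its `f`-value beats the threshold `C`. -/
def lowP (C : WithTop ℝ) (n : Node σ) : Bool := decide ((n.f : WithTop ℝ) < C)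

/-- Relation between the candidate lists of the two runs: the low candidates agree. -/
def CandRel (C : WithTop ℝ) (l lP : List (Node σ)) : Prop :=
  l.filter (lowP C) = lP.filter (lowP C)

/-- Relation between corresponding beam slots at the start of a level. -/
def SlotRel (C : WithTop ℝ) (s sP : Option (Node σ)) : Prop :=
  sP = s ∨ ∃ n, s = some n ∧ sP = none ∧ C ≤ (n.f : WithTop ℝ)

/-- Relation between corresponding next-beam slots in mid-level (before pruning). -/
def SlotRel' (C : WithTop ℝ) (s sP : Option (Node σ)) : Prop :=
  sP = s ∨ (∃ n, s = some n ∧ C ≤ (n.f : WithTop ℝ) ∧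
      (sP = none ∨ ∃ m, sP = some m ∧ C ≤ (m.f : WithTop ℝ))) ∨
    (s = none ∧ ∃ m, sP = some m ∧ C ≤ (m.f : WithTop ℝ))

/-- Invariant between the two level states during a level. -/
structure StRel (C : WithTop ℝ) (st stP : LevelState σ) : Prop where
  inc_eq : stP.incumbent = st.incumbent
  inc_le : incCost st.incumbent ≤ C
  cand : CandRel C st.candidates stP.candidates
  beam : List.Forall₂ (SlotRel' C) st.nextBeam stP.nextBeam

lemma incCost_updateIncumbent_le (gs : List (Node σ)) :
    ∀ inc : Option (Node σ), incCost (updateIncumbent inc gs) ≤ incCost inc := by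
  induction gs with
  | nil => intro inc; exact le_rfl
  | cons g gs ih =>
    intro inc
    rw [updateIncumbent, List.foldl_cons]
    refine le_trans (ih _) ?_
    split_ifs with h
    · exact le_of_lt h
    · exact le_rfl

lemma updateIncumbent_of_ge (gs : List (Node σ)) (inc : Option (Node σ))
    (h : ∀ c ∈ gs, incCost inc ≤ (c.f : WithTop ℝ)) : updateIncumbent inc gs = inc := by
  induction gs with
  | nil => rfl
  | cons g gs ih =>
    rw [updateIncumbent, List.foldl_cons, if_neg (not_lt.2 (h g (by simp)))]
    exact ih fun c hc => h c (by simp [hc])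

lemma le_f_of_mem_children {n k : Node σ} (hk : k ∈ children S n) : n.f ≤ k.f := by
  rw [children, List.mem_map] at hk
  obtain ⟨p, _, rfl⟩ := hk
  exact le_max_right _ _

lemma f_le_of_rank_le {x e : Node σ} (h : rank S key x ≤ rank S key e) : x.f ≤ e.f := by
  rw [rank, rank, Prod.Lex.le_iff] at h
  rcases h with h | ⟨h, -⟩
  · exact le_of_lt h
  · exact le_of_eq h

lemma stRel_expandSlot {C : WithTop ℝ} {st stP : LevelState σ} {s sP : Option (Node σ)}
    (hst : StRel C st stP) (hs : SlotRel C s sP) :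
    StRel C (expandSlot S st s) (expandSlot S stP sP) := by
  rcases hs with rfl | ⟨n, rfl, rfl, hf⟩
  · rcases sP with _ | n
    · exact hst
    · rw [expandSlot, expandSlot]
      exact ⟨by rw [hst.inc_eq], le_trans (incCost_updateIncumbent_le _ _) hst.inc_le,
        by rw [CandRel, List.filter_append, List.filter_append, hst.cand], hst.beam⟩
  · -- unpruned expands `n` (with `C ≤ n.f`), pruned does nothing
    rw [expandSlot, expandSlot]
    have hkids : ∀ k ∈ children S n, C ≤ (k.f : WithTop ℝ) := fun k hk =>
      le_trans hf (by exact_mod_cast le_f_of_mem_children S hk)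
    refine ⟨?_, le_trans (incCost_updateIncumbent_le _ _) hst.inc_le, ?_, hst.beam⟩
    · rw [hst.inc_eq]
      refine (updateIncumbent_of_ge _ _ fun c hc => ?_).symm
      exact le_trans hst.inc_le (hkids c (List.mem_of_mem_filter hc))
    · rw [CandRel, List.filter_append]
      have : ((children S n).filter fun c => !S.isGoal c.state).filter (lowP C) = [] := by
        rw [List.filter_eq_nil_iff]
        intro k hk
        have hkC := hkids k (List.mem_of_mem_filter hk)
        simp only [lowP, decide_eq_true_eq]
        exact not_lt.2 hkC
      rw [this, List.append_nil]
      exact hst.cand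

/-- The selection part of `processSlot`. -/
def selPart (st : LevelState σ) : LevelState σ :=
  match selectMin S key st.candidates with
  | none => { st with nextBeam := st.nextBeam ++ [none] }
  | some n => { st with candidates := st.candidates.erase n,
                        nextBeam := st.nextBeam ++ [some n] }

lemma processSlot_eq (st : LevelState σ) (slot : Option (Node σ)) :
    processSlot S key st slot = selPart S key (expandSlot S st slot) := rfl

lemma stRel_selPart {C : WithTop ℝ} {st stP : LevelState σ} (hst : StRel C st stP) :
    StRel C (selPart S key st) (selPart S key stP) := by
  have hcand := hst.cand
  rcases hl : selectMin S key st.candidates with _ | e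
  · -- unpruned candidates empty
    have hnil : st.candidates = [] := List.argmin_eq_none.1 hl
    rcases hlP : selectMin S key stP.candidates with _ | m
    · rw [selPart, selPart, hl, hlP]
      exact ⟨hst.inc_eq, hst.inc_le, hst.cand,
        List.rel_append hst.beam (List.Forall₂.cons (Or.inl rfl) List.Forall₂.nil)⟩
    · -- pruned selects a (necessarily high) node, unpruned selects none
      have hmC : ¬ (m.f : WithTop ℝ) < C := by
        intro hlow
        have hmem : m ∈ stP.candidates.filter (lowP C) :=
          List.mem_filter.2 ⟨List.argmin_mem hlP, by simp [lowP, hlow]⟩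
        rw [← hcand, hnil] at hmem
        simp at hmem
      rw [selPart, selPart, hl, hlP]
      refine ⟨hst.inc_eq, hst.inc_le, ?_, ?_⟩
      · rw [CandRel, filter_erase_neg (by simpa [lowP] using hmC)]
        exact hst.cand
      · exact List.rel_append hst.beam
          (List.Forall₂.cons (Or.inr (Or.inr ⟨rfl, m, rfl, not_lt.1 hmC⟩)) List.Forall₂.nil)
  · by_cases hlow : (e.f : WithTop ℝ) < C
    · -- the selected node is low: both runs select it
      have hsmall : ∀ x : Node σ, rank S key x ≤ rank S key e → lowP C x = true := by
        intro x hx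
        have : (x.f : WithTop ℝ) ≤ (e.f : WithTop ℝ) := by
          exact_mod_cast f_le_of_rank_le S key hx
        simp [lowP, lt_of_le_of_lt this hlow]
      have hlP : selectMin S key stP.candidates = some e :=
        argmin_eq_of_filter_eq hcand hl hsmall
      rw [selPart, selPart, hl, hlP]
      refine ⟨hst.inc_eq, hst.inc_le, ?_, ?_⟩
      · rw [CandRel, filter_erase_pos (hsmall e le_rfl), filter_erase_pos (hsmall e le_rfl),
          hst.cand]
      · exact List.rel_append hst.beam (List.Forall₂.cons (Or.inl rfl) List.Forall₂.nil)
    · -- the selected node is high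
      have heC : C ≤ (e.f : WithTop ℝ) := not_lt.1 hlow
      rcases hlP : selectMin S key stP.candidates with _ | m
      · rw [selPart, selPart, hl, hlP]
        refine ⟨hst.inc_eq, hst.inc_le, ?_, ?_⟩
        · rw [CandRel, filter_erase_neg (by simpa [lowP] using hlow)]
          exact hst.cand
        · exact List.rel_append hst.beam
            (List.Forall₂.cons (Or.inr (Or.inl ⟨e, rfl, heC, Or.inl rfl⟩)) List.Forall₂.nil)
      · -- both select (different, high) nodes
        have hmC : ¬ (m.f : WithTop ℝ) < C := by
          intro hlowm
          have hmem : m ∈ stP.candidates.filter (lowP C) :=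
            List.mem_filter.2 ⟨List.argmin_mem hlP, by simp [lowP, hlowm]⟩
          rw [← hcand] at hmem
          have hml : m ∈ st.candidates := List.mem_of_mem_filter hmem
          have : rank S key e ≤ rank S key m := List.le_of_mem_argmin hml hl
          have : (m.f : WithTop ℝ) ≥ (e.f : WithTop ℝ) := by
            exact_mod_cast f_le_of_rank_le S key this
          exact hlow (lt_of_le_of_lt this hlowm)
        rw [selPart, selPart, hl, hlP]
        refine ⟨hst.inc_eq, hst.inc_le, ?_, ?_⟩
        · rw [CandRel, filter_erase_neg (by simpa [lowP] using hlow),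
            filter_erase_neg (by simpa [lowP] using hmC)]
          exact hst.cand
        · exact List.rel_append hst.beam
            (List.Forall₂.cons
              (Or.inr (Or.inl ⟨e, rfl, heC, Or.inr ⟨m, rfl, not_lt.1 hmC⟩⟩)) List.Forall₂.nil)

lemma stRel_processSlot {C : WithTop ℝ} {st stP : LevelState σ} {s sP : Option (Node σ)}
    (hst : StRel C st stP) (hs : SlotRel C s sP) :
    StRel C (processSlot S key st s) (processSlot S key stP sP) := by
  rw [processSlot_eq, processSlot_eq]
  exact stRel_selPart S key (stRel_expandSlot S hst hs)

lemma stRel_foldl {C : WithTop ℝ} :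
    ∀ {b bP : List (Option (Node σ))}, List.Forall₂ (SlotRel C) b bP →
      ∀ {st stP : LevelState σ}, StRel C st stP →
        StRel C (b.foldl (processSlot S key) st) (bP.foldl (processSlot S key) stP) := by
  intro b bP h
  induction h with
  | nil => exact fun hst => hst
  | @cons a b l lP hab _ ih =>
    intro st stP hst
    exact ih (stRel_processSlot S key hst hab)

lemma forall₂_prune {C : WithTop ℝ} {inc' : Option (Node σ)} (hinc : incCost inc' ≤ C)
    {nb nbP : List (Option (Node σ))} (h : List.Forall₂ (SlotRel' C) nb nbP) :
    List.Forall₂ (SlotRel (incCost inc')) nb (pruneBeam inc' nbP) := by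
  rw [pruneBeam, List.forall₂_map_right_iff]
  refine h.imp ?_
  rintro s sP (rfl | ⟨n, rfl, hn, hsP⟩ | ⟨rfl, m, rfl, hm⟩)
  · rcases sP with _ | n
    · exact Or.inl rfl
    · dsimp only
      split_ifs with h'
      · exact Or.inr ⟨n, rfl, rfl, h'⟩
      · exact Or.inl rfl
  · have hn' : incCost inc' ≤ (n.f : WithTop ℝ) := le_trans hinc hn
    rcases hsP with rfl | ⟨m, rfl, hm⟩
    · exact Or.inr ⟨n, rfl, rfl, hn'⟩
    · dsimp only
      rw [if_pos (le_trans hinc hm)]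
      exact Or.inr ⟨n, rfl, rfl, hn'⟩
  · dsimp only
    rw [if_pos (le_trans hinc hm)]
    exact Or.inl rfl

lemma main_invariant (w : ℕ) (t : ℕ) :
    (runP S key w t).2 = (run S key w t).2 ∧
      List.Forall₂ (SlotRel (incCost (run S key w t).2)) (run S key w t).1 (runP S key w t).1 := by
  induction t with
  | zero =>
    refine ⟨rfl, ?_⟩
    exact List.forall₂_same.2 fun x _ => Or.inl rfl
  | succ t ih =>
    obtain ⟨hinc, hbeam⟩ := ih
    set C := incCost (run S key w t).2 with hC
    have h0 : StRel C (⟨[], [], (run S key w t).2⟩ : LevelState σ)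
        (⟨[], [], (runP S key w t).2⟩ : LevelState σ) :=
      ⟨hinc, le_rfl, rfl, List.Forall₂.nil⟩
    have hfold := stRel_foldl S key hbeam h0
    set stF := (run S key w t).1.foldl (processSlot S key)
      (⟨[], [], (run S key w t).2⟩ : LevelState σ) with hstF
    set stPF := (runP S key w t).1.foldl (processSlot S key)
      (⟨[], [], (runP S key w t).2⟩ : LevelState σ) with hstPF
    have hrun1 : run S key w (t + 1) = (stF.nextBeam, stF.incumbent) := rfl
    have hrunP1 : runP S key w (t + 1) =
        (pruneBeam stPF.incumbent stPF.nextBeam, stPF.incumbent) := rfl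
    rw [hrun1, hrunP1]
    refine ⟨hfold.inc_eq, ?_⟩
    have h2 := forall₂_prune (inc' := stPF.incumbent)
        (by rw [hfold.inc_eq]; exact hfold.inc_le) hfold.beam
    dsimp only
    rw [← hfold.inc_eq]
    exact h2

lemma forall₂_getElem? {α β : Type*} {R : α → β → Prop} :
    ∀ {l : List α} {l' : List β}, List.Forall₂ R l l' → ∀ j : ℕ,
      (l[j]? = none ∧ l'[j]? = none) ∨
        ∃ a b, l[j]? = some a ∧ l'[j]? = some b ∧ R a b := by
  intro l l' h
  induction h with
  | nil => intro j; left; simp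
  | @cons a b l l' hab _ ih =>
    intro j
    cases j with
    | zero => right; exact ⟨a, b, by simp, by simp, hab⟩
    | succ j => simpa using ih j

end MonobeamAux

/-- Lemma 4: at every level, monobeam with incumbent-based pruning
(run with an admissible heuristic) selects for each slot of the next beam exactly the
node that monobeam without pruning would have selected for that slot, except that some
slots which would have held nodes with `f`-value ≥ the incumbent solution cost may
instead be left empty. -/
theorem monobeam_pruning_selects_same
    {σ : Type} (S : SearchSpace σ) (key : Node σ → ℕ) (hadm : S.Admissible)
    (w t j : ℕ) :
    ((runP S key w t).1)[j]? = ((run S key w t).1)[j]? ∨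
      ∃ n : Node σ,
        ((run S key w t).1)[j]? = some (some n) ∧
        ((runP S key w t).1)[j]? = some none ∧
        incCost (runP S key w t).2 ≤ (n.f : WithTop ℝ) := by
  obtain ⟨hinc, hbeam⟩ := main_invariant S key w t
  rcases forall₂_getElem? hbeam j with ⟨h1, h2⟩ | ⟨a, b, h1, h2, hab⟩
  · left; rw [h1, h2]
  · rcases hab with rfl | ⟨n, rfl, rfl, hf⟩
    · left; rw [h1, h2]
    · right
      exact ⟨n, h1, h2, by rw [hinc]; exact hf⟩

end
end

section
/- Standard beam search is not monotonic in the beam width: there exists a finite search space with a start state, a goal state, unit action costs, and an admissible heuristic such that standard beam search with beam width 1 returns a solution of strictly lower cost than the solution returned by standard beam search with beam width 2. (In particular, the 11-node tree of Figure 2, where with width 1 the search proceeds A–B–D–G to a goal of cost 4, while with width 2 the children of C displace D from the level-2 beam and the cheap solution is lost.) -/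
/-!
Search tree: `0 → 1, 2`; `1 → 3, 4`; `2 → 5, 6`; `3 → 8`; `5 → 7 → 9`, goals `8` and `9`.
With width 1 the search commits to `1` (`f = 2`) rather than `2` (`f = 3`) and follows
`1 → 3 → 8` to a goal of cost 3. With width 2 both `1` and `2` are kept, and at the next level
the children `5`, `6` of `2` (`f = 2`) displace `3` (`f = 3`), the only way to `8`; the search
then continues along `5 → 7 → 9` to a goal of cost 4. The heuristic is admissible because it is
dominated by a consistent function vanishing on the goals.
-/

open scoped Classical

noncomputable section

variable {σ : Type}

/-- Children for standard beam search: `f = g + h` (no pathmax). -/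
def childrenStd (S : SearchSpace σ) (n : Node σ) : List (Node σ) :=
  (S.succ n.state).map fun p =>
    { state := p.1, g := n.g + p.2, f := n.g + p.2 + S.h p.1 }

/-- Retain the (at most) `w` nodes with lowest `f`-values, ties broken in favor of
lower `h`-values (remaining ties broken by the fixed deterministic key inside
`rank`). -/
def takeBest (S : SearchSpace σ) (key : Node σ → ℕ) (w : ℕ) (l : List (Node σ)) :
    List (Node σ) :=
  (l.mergeSort (fun a b => decide (rank S key a ≤ rank S key b))).take w

/-- The beam of standard beam search with width `w` at level `t`. -/
def beamIter (S : SearchSpace σ) (key : Node σ → ℕ) (w : ℕ) : ℕ → List (Node σ)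
  | 0 => [startNode S]
  | t + 1 => takeBest S key w ((beamIter S key w t).flatMap (childrenStd S))

/-- All nodes generated while expanding level `t` of standard beam search. -/
def genAt (S : SearchSpace σ) (key : Node σ → ℕ) (w t : ℕ) : List (Node σ) :=
  (beamIter S key w t).flatMap (childrenStd S)

/-- A goal node is generated while expanding level `t`. -/
def FoundAt (S : SearchSpace σ) (key : Node σ → ℕ) (w t : ℕ) : Prop :=
  ∃ n ∈ genAt S key w t, S.isGoal n.state = true

/-- Standard beam search with width `w` returns the solution node `n`: at the first
level at which a goal node is generated, `n` is a generated goal node of lowest cost. -/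
def BeamReturns (S : SearchSpace σ) (key : Node σ → ℕ) (w : ℕ) (n : Node σ) : Prop :=
  ∃ t, FoundAt S key w t ∧ (∀ t' < t, ¬ FoundAt S key w t') ∧
    n ∈ genAt S key w t ∧ S.isGoal n.state = true ∧
    ∀ m ∈ genAt S key w t, S.isGoal m.state = true → n.g ≤ m.g

theorem SearchSpace.admissible_of_le_consistent (S : SearchSpace σ) (D : σ → ℝ)
    (hle : ∀ s, S.h s ≤ D s) (hgoal : ∀ t, S.isGoal t = true → D t ≤ 0)
    (hcons : ∀ s, ∀ p ∈ S.succ s, D s ≤ p.2 + D p.1) : S.Admissible := by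
  intro s t c ht hpath
  refine (hle s).trans ?_
  induction hpath with
  | refl s => exact hgoal s ht
  | step hmem _ ih => linarith [hcons _ _ hmem, ih ht]

theorem beamIter_succ (S : SearchSpace σ) (key : Node σ → ℕ) (w t : ℕ) :
    beamIter S key w (t + 1) = takeBest S key w (genAt S key w t) :=
  rfl

theorem takeBest_eq_take_of_perm (S : SearchSpace σ) (key : Node σ → ℕ) (w : ℕ)
    {l l' : List (Node σ)} (hperm : l.Perm l')
    (hsorted : l'.Pairwise fun a b => rank S key a < rank S key b) :
    takeBest S key w l = l'.take w := by
  have hinj := List.inj_on_of_nodup_map (List.pairwise_map.2 hsorted).nodup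
  have hsort : (l.mergeSort fun a b => decide (rank S key a ≤ rank S key b)) = l' := by
    have hperm' :=
      (List.mergeSort_perm l fun a b => decide (rank S key a ≤ rank S key b)).trans hperm
    refine List.Perm.eq_of_pairwise (le := fun a b => rank S key a ≤ rank S key b)
      ?_ ?_ (hsorted.imp le_of_lt) hperm'
    · intro a b ha hb hab hba
      exact hinj (hperm'.subset ha) hb (le_antisymm hab hba)
    · simpa using List.pairwise_mergeSort (le := fun a b => decide (rank S key a ≤ rank S key b))
        (fun a b c hab hbc => by simpa using le_trans (by simpa using hab) (by simpa using hbc))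
        (fun a b => by simpa using le_total _ _) l
  rw [takeBest, hsort]

theorem beamReturns_of_genAt_eq_singleton {S : SearchSpace σ} {key : Node σ → ℕ}
    {w t : ℕ} {n : Node σ}
    (hbefore : ∀ t' < t, ∀ m ∈ genAt S key w t', S.isGoal m.state = false)
    (hgen : genAt S key w t = [n]) (hgoal : S.isGoal n.state = true) :
    BeamReturns S key w n := by
  refine ⟨t, ⟨n, by simp [hgen], hgoal⟩, ?_, by simp [hgen], hgoal, ?_⟩
  · rintro t' ht' ⟨m, hm, hmgoal⟩
    simp [hbefore t' ht' m hm] at hmgoal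
  · intro m hm _
    rw [hgen, List.mem_singleton] at hm
    rw [hm]

end

namespace BeamCounterexample

def tree : Fin 10 → List (Fin 10)
  | 0 => [1, 2]
  | 1 => [3, 4]
  | 2 => [5, 6]
  | 3 => [8]
  | 4 => []
  | 5 => [7]
  | 6 => []
  | 7 => [9]
  | 8 => []
  | 9 => []

def heur : Fin 10 → ℝ
  | 0 => 0 | 1 => 1 | 2 => 2 | 3 => 1 | 4 => 5
  | 5 => 0 | 6 => 0 | 7 => 1 | 8 => 0 | 9 => 0

noncomputable def space : SearchSpace (Fin 10) where
  start := 0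
  succ s := (tree s).map (·, 1)
  isGoal s := decide (s = 8 ∨ s = 9)
  h := heur
  succ_nonneg s p hp := by
    obtain ⟨_, _, rfl⟩ := List.mem_map.1 hp
    exact zero_le_one
  h_nonneg s := by fin_cases s <;> norm_num [heur]

/-- The cost to the nearest goal, set to `5` at the dead ends `4` and `6` so that it
dominates `heur`. -/
def goalDist : Fin 10 → ℝ
  | 0 => 3 | 1 => 2 | 2 => 3 | 3 => 1 | 4 => 5
  | 5 => 2 | 6 => 5 | 7 => 1 | 8 => 0 | 9 => 0

/-- Breaks the tie between the two children of `2`, both with `f = 2` and `h = 0`. -/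
def key (n : Node (Fin 10)) : ℕ := n.state.val

theorem succ_cost_eq_one : ∀ s, ∀ p ∈ space.succ s, p.2 = (1 : ℝ) := by
  intro s p hp
  obtain ⟨_, _, rfl⟩ := List.mem_map.1 hp
  rfl

theorem admissible : space.Admissible := by
  refine space.admissible_of_le_consistent goalDist (fun s => ?_) (fun t ht => ?_)
    (fun s p hp => ?_)
  · fin_cases s <;> norm_num [space, heur, goalDist]
  · rcases (by simpa [space] using ht : t = 8 ∨ t = 9) with rfl | rfl <;> norm_num [goalDist]
  · obtain ⟨t, ht, rfl⟩ := List.mem_map.1 hp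
    fin_cases s <;> simp only [tree, List.mem_cons, List.not_mem_nil, or_false] at ht <;>
      rcases ht with rfl | rfl <;> norm_num [goalDist]

theorem childrenStd_space (n : Node (Fin 10)) :
    childrenStd space n = (tree n.state).map fun s => ⟨s, n.g + 1, n.g + 1 + heur s⟩ := by
  simp [childrenStd, space, Function.comp_def]

theorem genAt_zero (w : ℕ) : genAt space key w 0 = [⟨1, 1, 2⟩, ⟨2, 1, 3⟩] := by
  simp only [genAt, beamIter, List.flatMap_singleton, childrenStd_space]
  simp [startNode, space, tree, heur]
  norm_num

theorem beamIter_one_one : beamIter space key 1 1 = [⟨1, 1, 2⟩] := by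
  rw [beamIter_succ, genAt_zero, takeBest_eq_take_of_perm _ _ _ (List.Perm.refl _)]
  · rfl
  · norm_num [rank, space, heur, key, Prod.Lex.toLex_lt_toLex]

theorem genAt_one_one : genAt space key 1 1 = [⟨3, 2, 3⟩, ⟨4, 2, 7⟩] := by
  simp [genAt, beamIter_one_one, childrenStd_space, tree, heur]
  norm_num

theorem beamIter_one_two : beamIter space key 1 2 = [⟨3, 2, 3⟩] := by
  rw [beamIter_succ, genAt_one_one, takeBest_eq_take_of_perm _ _ _ (List.Perm.refl _)]
  · rfl
  · norm_num [rank, space, heur, key, Prod.Lex.toLex_lt_toLex]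

theorem genAt_one_two : genAt space key 1 2 = [⟨8, 3, 3⟩] := by
  simp [genAt, beamIter_one_two, childrenStd_space, tree, heur]
  norm_num

theorem beamIter_two_one : beamIter space key 2 1 = [⟨1, 1, 2⟩, ⟨2, 1, 3⟩] := by
  rw [beamIter_succ, genAt_zero, takeBest_eq_take_of_perm _ _ _ (List.Perm.refl _)]
  · rfl
  · norm_num [rank, space, heur, key, Prod.Lex.toLex_lt_toLex]

theorem genAt_two_one :
    genAt space key 2 1 = [⟨3, 2, 3⟩, ⟨4, 2, 7⟩, ⟨5, 2, 2⟩, ⟨6, 2, 2⟩] := by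
  simp [genAt, beamIter_two_one, childrenStd_space, tree, heur]
  norm_num

theorem beamIter_two_two : beamIter space key 2 2 = [⟨5, 2, 2⟩, ⟨6, 2, 2⟩] := by
  rw [beamIter_succ, genAt_two_one, takeBest_eq_take_of_perm _ _ _
    (l' := [⟨5, 2, 2⟩, ⟨6, 2, 2⟩, ⟨3, 2, 3⟩, ⟨4, 2, 7⟩])]
  · rfl
  · exact List.perm_append_comm (l₁ := [_, _]) (l₂ := [_, _])
  · norm_num [rank, space, heur, key, Prod.Lex.toLex_lt_toLex]
    decide

theorem genAt_two_two : genAt space key 2 2 = [⟨7, 3, 4⟩] := by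
  simp [genAt, beamIter_two_two, childrenStd_space, tree, heur]
  norm_num

theorem genAt_two_three : genAt space key 2 3 = [⟨9, 4, 4⟩] := by
  rw [genAt, beamIter_succ, genAt_two_two]
  simp [takeBest, childrenStd_space, tree, heur]
  norm_num

end BeamCounterexample

open BeamCounterexample

/-- standard beam search is not monotonic in the beam width.  There
is a finite search space with unit action costs and an admissible heuristic (e.g. the
11-node tree of Figure 2) on which beam search with width 1 returns a solution of
strictly lower cost than the solution returned by beam search with width 2. -/
theorem beam_search_not_monotonic :
    ∃ (σ : Type) (_ : Finite σ) (S : SearchSpace σ) (key : Node σ → ℕ)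
      (n₁ n₂ : Node σ),
      (∀ s, ∀ p ∈ S.succ s, p.2 = (1 : ℝ)) ∧
      S.Admissible ∧
      BeamReturns S key 1 n₁ ∧
      BeamReturns S key 2 n₂ ∧
      n₁.g < n₂.g := by
  refine ⟨Fin 10, inferInstance, space, key, ⟨8, 3, 3⟩, ⟨9, 4, 4⟩, succ_cost_eq_one,
    admissible, ?_, ?_, by norm_num⟩
  · refine beamReturns_of_genAt_eq_singleton (fun t' ht' m hm => ?_) genAt_one_two rfl
    interval_cases t' <;>
      simp only [genAt_zero, genAt_one_one, List.mem_cons, List.not_mem_nil, or_false] at hm <;>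
      rcases hm with rfl | rfl <;> rfl
  · refine beamReturns_of_genAt_eq_singleton (fun t' ht' m hm => ?_) genAt_two_three rfl
    interval_cases t' <;>
      simp only [genAt_zero, genAt_two_one, genAt_two_two, List.mem_cons, List.not_mem_nil,
        or_false] at hm <;>
      rcases hm with rfl | rfl | rfl | rfl <;> rfl
end
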